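/- arXiv:quant-ph/0611131 — 3 statements merged into one kernel-verified Lean document; each statement's English description precedes it below -/
import Mathlib

section
/- Let M ⊆ L ⊆ G be subspaces with dim L = dim M + 1. Then for every subset S ⊆ P the following three statements are equivalent: (1) M^⊥ ∩ G_S ⊆ L^⊥; (2) L + G_{P∖S} = M + G_{P∖S}; (3) L ∩ G_{P∖S} is not contained in M. -/
/-- For `S ⊆ P`, the coordinate subspace `G_S = ⊕_{p ∈ S} G_p` of `G = ⊕_{p ∈ P} G_p`,
realised as the submodule of functions supported in `S`. -/
def coordSub (F : Type*) [Field F] {P : Type*} (G : P → Type*) [∀ p, AddCommGroup (G p)]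
    [∀ p, Module F (G p)] (S : Set P) : Submodule F (∀ p, G p) where
  carrier := {x | ∀ p ∉ S, x p = 0}
  add_mem' := by
    intro x y hx hy p hp
    simp [hx p hp, hy p hp]
  zero_mem' := fun p _ => rfl
  smul_mem' := by
    intro c x hx p hp
    simp [hx p hp]

/-- The orthogonal sum `ω = Σ_p ω_p` of bilinear forms on `G = ⊕_p G_p`. -/
noncomputable def sumForm {F : Type*} [Field F] {P : Type*} [Fintype P] {G : P → Type*}
    [∀ p, AddCommGroup (G p)] [∀ p, Module F (G p)]
    (ω : ∀ p, LinearMap.BilinForm F (G p)) : LinearMap.BilinForm F (∀ p, G p) :=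
  LinearMap.mk₂ F (fun x y => ∑ p, ω p (x p) (y p))
    (fun x x' y => by simp [Finset.sum_add_distrib])
    (fun c x y => by simp [Finset.mul_sum])
    (fun x y y' => by simp [Finset.sum_add_distrib])
    (fun c x y => by simp [Finset.mul_sum])

/-- Let `M ⊆ L ⊆ G` with `dim L = dim M + 1`.  For every `S ⊆ P` the following are
equivalent: (1) `M^⊥ ∩ G_S ⊆ L^⊥`; (2) `L + G_{P∖S} = M + G_{P∖S}`;
(3) `L ∩ G_{P∖S} ⊄ M`. -/
theorem stmt_14 {F : Type*} [Field F] {P : Type*} [Fintype P] {G : P → Type*}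
    [∀ p, AddCommGroup (G p)] [∀ p, Module F (G p)] [∀ p, FiniteDimensional F (G p)]
    (ω : ∀ p, LinearMap.BilinForm F (G p))
    (halt : ∀ p, (ω p).IsAlt) (hnd : ∀ p, (ω p).Nondegenerate)
    (M L : Submodule F (∀ p, G p)) (hML : M ≤ L)
    (hdim : Module.finrank F L = Module.finrank F M + 1) (S : Set P) :
    (LinearMap.BilinForm.orthogonal (sumForm ω) M ⊓ coordSub F G S ≤
        LinearMap.BilinForm.orthogonal (sumForm ω) L ↔
      L ⊔ coordSub F G Sᶜ = M ⊔ coordSub F G Sᶜ) ∧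
    (L ⊔ coordSub F G Sᶜ = M ⊔ coordSub F G Sᶜ ↔ ¬ L ⊓ coordSub F G Sᶜ ≤ M) := by
  classical
  set B := sumForm ω with hB
  have hBapp : ∀ x y : ∀ p, G p, B x y = ∑ p, ω p (x p) (y p) := fun x y => rfl
  have hBalt : B.IsAlt := by
    intro x
    rw [hBapp]
    exact Finset.sum_eq_zero fun p _ => halt p (x p)
  have hBrefl : B.IsRefl := hBalt.isRefl
  have hsingle : ∀ (p : P) (v : G p) (x : ∀ q, G q),
      B (Pi.single p v) x = ω p v (x p) := by
    intro p v x
    rw [hBapp]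
    rw [Finset.sum_eq_single p]
    · simp
    · intro q _ hq
      simp [Pi.single_eq_of_ne hq]
    · simp
  have hsingle' : ∀ (p : P) (v : G p) (x : ∀ q, G q),
      B x (Pi.single p v) = ω p (x p) v := by
    intro p v x
    rw [hBapp]
    rw [Finset.sum_eq_single p]
    · simp
    · intro q _ hq
      simp [Pi.single_eq_of_ne hq]
    · simp
  have hBnd : B.Nondegenerate := by
    refine (LinearMap.IsRefl.nondegenerate_iff_separatingLeft hBrefl).2 ?_
    intro x hx
    funext p
    refine (hnd p).1 (x p) fun v => ?_
    have h := hx (Pi.single p v)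
    rwa [hsingle'] at h
  have horthCoord : ∀ T : Set P, B.orthogonal (coordSub F G T) = coordSub F G Tᶜ := by
    intro T
    ext x
    constructor
    · intro hx p hp
      simp only [Set.mem_compl_iff, not_not] at hp
      refine (hnd p).1 (x p) fun v => ?_
      have hmem : (Pi.single p v : ∀ q, G q) ∈ coordSub F G T := by
        intro q hq
        exact Pi.single_eq_of_ne (by rintro rfl; exact hq hp) v
      have h1 : B (Pi.single p v) x = 0 := hx _ hmem
      rw [hsingle] at h1
      exact (halt p).isRefl _ _ h1
    · intro hx y hy
      show B y x = 0
      rw [hBapp]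
      refine Finset.sum_eq_zero fun p _ => ?_
      by_cases hp : p ∈ T
      · rw [hx p (by simpa using hp)]
        simp
      · rw [hy p hp]
        simp
  have horthsup : ∀ A C : Submodule F (∀ p, G p),
      B.orthogonal (A ⊔ C) = B.orthogonal A ⊓ B.orthogonal C := by
    intro A C
    apply le_antisymm
    · exact le_inf (B.orthogonal_le le_sup_left) (B.orthogonal_le le_sup_right)
    · rintro x hx n hn
      rcases Submodule.mem_sup.mp hn with ⟨a, ha, c, hc, rfl⟩
      have h1 : B a x = 0 := hx.1 a ha
      have h2 : B c x = 0 := hx.2 c hc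
      show B (a + c) x = 0
      rw [map_add, LinearMap.add_apply, h1, h2, add_zero]
  set C := coordSub F G Sᶜ with hC
  have hkey : B.orthogonal M ⊓ coordSub F G S = B.orthogonal (M ⊔ C) := by
    rw [horthsup, hC, horthCoord, compl_compl]
  have iff2 : L ≤ M ⊔ C ↔ L ⊔ C = M ⊔ C := by
    constructor
    · intro h
      exact le_antisymm (sup_le h le_sup_right) (sup_le_sup_right hML C)
    · intro h
      exact le_sup_left.trans h.le
  have iff1 : B.orthogonal M ⊓ coordSub F G S ≤ B.orthogonal L ↔ L ≤ M ⊔ C := by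
    rw [hkey]
    constructor
    · intro h
      have h2 := B.orthogonal_le h
      rwa [B.orthogonal_orthogonal hBnd hBrefl, B.orthogonal_orthogonal hBnd hBrefl] at h2
    · intro h
      exact B.orthogonal_le h
  have iff3 : L ⊔ C = M ⊔ C ↔ ¬ L ⊓ C ≤ M := by
    constructor
    · intro h hc
      have hL : L ≤ M ⊔ C := iff2.mpr h
      have hmod : (M ⊔ C) ⊓ L = M ⊔ C ⊓ L := sup_inf_assoc_of_le C hML
      have hLM : L ≤ M := by
        have : L = M ⊔ C ⊓ L := by
          rw [← hmod, inf_eq_right.mpr hL]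
        have hCL : C ⊓ L ≤ M := by rw [inf_comm]; exact hc
        rw [this]
        exact sup_le le_rfl hCL
      have : L = M := le_antisymm hLM hML
      rw [this] at hdim
      omega
    · intro hc
      rcases SetLike.not_le_iff_exists.mp hc with ⟨x, hxLC, hxM⟩
      have hspan : M ⊔ (F ∙ x) ≤ L :=
        sup_le hML ((Submodule.span_singleton_le_iff_mem x L).mpr hxLC.1)
      have hlt : M < M ⊔ (F ∙ x) := by
        refine lt_of_le_of_ne le_sup_left fun h => hxM ?_
        rw [h]
        exact Submodule.mem_sup_right (Submodule.mem_span_singleton_self x)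
      have h1 : Module.finrank F M < Module.finrank F ↥(M ⊔ (F ∙ x)) :=
        Submodule.finrank_lt_finrank_of_lt hlt
      have h2 : Module.finrank F ↥(M ⊔ (F ∙ x)) ≤ Module.finrank F L :=
        Submodule.finrank_mono hspan
      have heq : M ⊔ (F ∙ x) = L :=
        Submodule.eq_of_le_of_finrank_eq hspan (by omega)
      have hLle : L ≤ M ⊔ C := by
        rw [← heq]
        exact sup_le_sup_left ((Submodule.span_singleton_le_iff_mem x C).mpr hxLC.2) M
      exact iff2.mp hLle
  exact ⟨iff1.trans iff2, iff3⟩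
end

section
/- Let L ⊆ G be an isotropic subspace (ω vanishes on L × L) and suppose that L' := L ∩ G_p is nonzero for some party p ∈ P. Then L splits off a summand in G_p: there exists a subspace G' ⊆ G_p such that ω restricts to a nondegenerate (symplectic) form on G', dim G' = 2 · dim L', L' ⊆ G', and, setting G'' := (G')^⊥ and L'' := L ∩ G'', one has the orthogonal direct sum decomposition G = G' ⊕ G'' and the direct sum decomposition L = L' ⊕ L''. -/
/-- Let `L ⊆ G` be isotropic for `ω` with `L' := L ∩ G_p ≠ 0` for some party `p`.  Then
`L` splits off a summand in `G_p`: there is `G' ⊆ G_p` on which `ω` restricts to a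
symplectic (nondegenerate) form, with `dim G' = 2 · dim L'` and `L' ⊆ G'`, such that,
putting `G'' := (G')^⊥` and `L'' := L ∩ G''`, one has the orthogonal direct sum
decomposition `G = G' ⊕ G''` and the direct sum decomposition `L = L' ⊕ L''`. -/
theorem stmt_15 {F : Type*} [Field F] {P : Type*} [Fintype P] {G : P → Type*}
    [∀ p, AddCommGroup (G p)] [∀ p, Module F (G p)] [∀ p, FiniteDimensional F (G p)]
    (ω : ∀ p, LinearMap.BilinForm F (G p))
    (halt : ∀ p, (ω p).IsAlt) (hnd : ∀ p, (ω p).Nondegenerate)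
    (L : Submodule F (∀ p, G p))
    (hiso : ∀ x ∈ L, ∀ y ∈ L, sumForm ω x y = 0)
    (p : P) (hL' : L ⊓ coordSub F G {p} ≠ ⊥) :
    ∃ G' : Submodule F (∀ q, G q),
      G' ≤ coordSub F G {p} ∧
      (LinearMap.BilinForm.restrict (sumForm ω) G').Nondegenerate ∧
      Module.finrank F G' = 2 * Module.finrank F ↥(L ⊓ coordSub F G {p}) ∧
      L ⊓ coordSub F G {p} ≤ G' ∧
      G' ⊓ LinearMap.BilinForm.orthogonal (sumForm ω) G' = ⊥ ∧
      G' ⊔ LinearMap.BilinForm.orthogonal (sumForm ω) G' = ⊤ ∧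
      (L ⊓ coordSub F G {p}) ⊓ (L ⊓ LinearMap.BilinForm.orthogonal (sumForm ω) G') = ⊥ ∧
      (L ⊓ coordSub F G {p}) ⊔ (L ⊓ LinearMap.BilinForm.orthogonal (sumForm ω) G') = L := by
  classical
  set B := sumForm ω with hBdef
  have hBapp : ∀ x y, B x y = ∑ q, ω q (x q) (y q) := fun x y => rfl
  have hBalt : B.IsAlt := fun x => by
    rw [hBapp]; exact Finset.sum_eq_zero fun q _ => halt q (x q)
  have hBrefl : B.IsRefl := hBalt.isRefl
  have hsingle : ∀ (q : P) (a : G q) (y : ∀ r, G r), B (Pi.single q a) y = ω q a (y q) := by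
    intro q a y
    rw [hBapp, Finset.sum_eq_single q]
    · simp
    · intro r _ hr; rw [Pi.single_eq_of_ne hr]; simp
    · simp
  have hsingle' : ∀ (q : P) (a : G q) (x : ∀ r, G r), B x (Pi.single q a) = ω q (x q) a := by
    intro q a x
    rw [hBapp, Finset.sum_eq_single q]
    · simp
    · intro r _ hr; rw [Pi.single_eq_of_ne hr]; simp
    · simp
  have hBnd : B.Nondegenerate := by
    refine (LinearMap.IsRefl.nondegenerate_iff_separatingLeft hBrefl).mpr ?_
    intro x hx
    funext q
    refine (hnd q).1 (x q) fun v => ?_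
    have := hx (Pi.single q v)
    rwa [hsingle'] at this
  set Gp := coordSub F G {p} with hGpdef
  have hmemGp : ∀ x ∈ Gp, ∀ q, q ≠ p → x q = 0 := fun x hx q hq =>
    hx q (by simp [hq])
  have hGpB : ∀ (x y : ∀ q, G q), y ∈ Gp → B x y = ω p (x p) (y p) := by
    intro x y hy
    rw [hBapp, Finset.sum_eq_single p]
    · intro q _ hq; rw [hmemGp y hy q hq]; simp
    · simp
  set W := L ⊓ Gp with hWdef
  have hWGp : W ≤ Gp := inf_le_right
  have hWL : W ≤ L := inf_le_left
  -- Φ : V →ₗ Dual W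
  set Φ : (∀ q, G q) →ₗ[F] Module.Dual F W := W.subtype.dualMap ∘ₗ (B : (∀ q, G q) →ₗ[F] (∀ q, G q) →ₗ[F] F) with hΦdef
  have hΦapp : ∀ x (w : W), Φ x w = B x (w : ∀ q, G q) := fun x w => rfl
  have hΦsurj : Function.Surjective Φ := by
    have h1 : Function.Surjective (W.subtype.dualMap) :=
      LinearMap.dualMap_surjective_of_injective W.injective_subtype
    have h2 : Function.Surjective (B : (∀ q, G q) →ₗ[F] (∀ q, G q) →ₗ[F] F) := by
      intro f
      exact ⟨(B.toDual hBnd).symm f, (B.toDual hBnd).apply_symm_apply f⟩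
    exact h1.comp h2
  -- complement N of W^⊥ ∩ Gp inside Gp
  set Kin : Submodule F Gp := (B.orthogonal W).comap Gp.subtype with hKindef
  obtain ⟨Nin, hKN⟩ := Kin.exists_isCompl
  set N : Submodule F (∀ q, G q) := Nin.map Gp.subtype with hNdef
  have hNGp : N ≤ Gp := Submodule.map_subtype_le _ _
  have hKmap : Kin.map Gp.subtype = Gp ⊓ B.orthogonal W := Submodule.map_comap_subtype _ _
  have hNdisj : ∀ x ∈ N, x ∈ B.orthogonal W → x = 0 := by
    intro x hxN hxO
    have hx : x ∈ Kin.map Gp.subtype ⊓ Nin.map Gp.subtype :=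
      ⟨by rw [hKmap]; exact ⟨hNGp hxN, hxO⟩, hxN⟩
    rw [← Submodule.map_inf _ Gp.injective_subtype, hKN.inf_eq_bot, Submodule.map_bot] at hx
    exact (Submodule.mem_bot F).mp hx
  have hsupGp : Kin.map Gp.subtype ⊔ N = Gp := by
    rw [hNdef, ← Submodule.map_sup, hKN.sup_eq_top, Submodule.map_subtype_top]
  have hWorth : ∀ x ∈ W, x ∈ B.orthogonal W := by
    intro x hx
    intro y hy
    exact hiso y (hWL hy) x (hWL hx)
  have hWN : W ⊓ N = ⊥ := by
    rw [eq_bot_iff]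
    intro x ⟨hxW, hxN⟩
    exact (Submodule.mem_bot F).mpr (hNdisj x hxN (hWorth x hxW))
  -- Φ restricted to N is bijective onto Dual W
  have hΦNinj : ∀ x ∈ N, (∀ w : W, B x (w : ∀ q, G q) = 0) → x = 0 := by
    intro x hxN hx
    refine hNdisj x hxN fun y hy => ?_
    exact hBrefl _ _ (hx ⟨y, hy⟩)
  have hΦNsurj : ∀ φ : Module.Dual F W, ∃ n ∈ N, Φ n = φ := by
    intro φ
    obtain ⟨v, hv⟩ := hΦsurj φ
    have hvp : Pi.single p (v p) ∈ Gp := by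
      intro q hq
      exact Pi.single_eq_of_ne (by simpa using hq) _
    have hΦvp : Φ (Pi.single p (v p)) = φ := by
      rw [← hv]
      ext w
      rw [hΦapp, hΦapp, hsingle, hGpB v w (hWGp w.2)]
    have : Pi.single p (v p) ∈ Kin.map Gp.subtype ⊔ N := by rw [hsupGp]; exact hvp
    obtain ⟨k, hk, n, hn, hkn⟩ := Submodule.mem_sup.mp this
    refine ⟨n, hn, ?_⟩
    have hkO : k ∈ B.orthogonal W := by rw [hKmap] at hk; exact hk.2
    have hΦk : Φ k = 0 := by
      ext w
      exact hBrefl _ _ (hkO (w : ∀ q, G q) w.2)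
    have := congrArg Φ hkn
    rw [map_add, hΦk, zero_add, hΦvp] at this
    exact this
  have hNrank : Module.finrank F N = Module.finrank F W := by
    have e : N ≃ₗ[F] Module.Dual F W := by
      refine LinearEquiv.ofBijective (Φ ∘ₗ N.subtype) ⟨?_, ?_⟩
      · rw [← LinearMap.ker_eq_bot, eq_bot_iff]
        intro x hx
        have : Φ (x : ∀ q, G q) = 0 := hx
        refine (Submodule.mem_bot F).mpr (Subtype.ext (hΦNinj x x.2 fun w => ?_))
        rw [← hΦapp, this]; rfl
      · intro φ
        obtain ⟨n, hn, hΦn⟩ := hΦNsurj φ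
        exact ⟨⟨n, hn⟩, hΦn⟩
    rw [e.finrank_eq, Subspace.dual_finrank_eq]
  set G' := W ⊔ N with hG'def
  have hG'Gp : G' ≤ Gp := sup_le hWGp hNGp
  have hG'rank : Module.finrank F G' = 2 * Module.finrank F W := by
    have := Submodule.finrank_sup_add_finrank_inf_eq W N
    rw [hWN, finrank_bot, add_zero, hNrank] at this
    rw [← hG'def] at this
    omega
  -- disjointness of G' and its orthogonal
  have hdisj : ∀ x ∈ G', x ∈ B.orthogonal G' → x = 0 := by
    intro x hxG hxO
    obtain ⟨w, hw, n, hn, hwn⟩ := Submodule.mem_sup.mp hxG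
    have hn0 : n = 0 := by
      refine hNdisj n hn fun ℓ hℓ => ?_
      have h1 : B ℓ x = 0 := hxO ℓ (le_sup_left (α := Submodule F (∀ q, G q)) hℓ)
      have h2 : B ℓ w = 0 := hiso ℓ (hWL hℓ) w (hWL hw)
      have := h1
      rw [← hwn, map_add, h2, zero_add] at this
      exact this
    rw [hn0, add_zero] at hwn
    subst hwn
    have : (⟨w, hw⟩ : W) = 0 := by
      rw [← Module.forall_dual_apply_eq_zero_iff F]
      intro φ
      obtain ⟨ν, hν, hΦν⟩ := hΦNsurj φ
      rw [← hΦν, hΦapp]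
      exact hxO ν (le_sup_right (α := Submodule F (∀ q, G q)) hν)
    exact congrArg Subtype.val this
  have hdisj' : Disjoint G' (B.orthogonal G') :=
    Submodule.disjoint_def.mpr hdisj
  have hndR : (B.restrict G').Nondegenerate :=
    B.nondegenerate_restrict_of_disjoint_orthogonal hBrefl hdisj'
  have hcompl : IsCompl G' (B.orthogonal G') :=
    (B.restrict_nondegenerate_iff_isCompl_orthogonal hBrefl).mp hndR
  refine ⟨G', hG'Gp, hndR, hG'rank, le_sup_left, hcompl.inf_eq_bot, hcompl.sup_eq_top, ?_, ?_⟩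
  · rw [eq_bot_iff]
    rintro x ⟨hxW, -, hxO⟩
    exact (Submodule.mem_bot F).mpr (hdisj x (le_sup_left (α := Submodule F (∀ q, G q)) hxW) hxO)
  · refine le_antisymm (sup_le hWL inf_le_left) ?_
    intro x hx
    have : x ∈ G' ⊔ B.orthogonal G' := by rw [hcompl.sup_eq_top]; trivial
    obtain ⟨g, hg, h, hh, hgh⟩ := Submodule.mem_sup.mp this
    obtain ⟨w, hw, n, hn, hwn⟩ := Submodule.mem_sup.mp hg
    have hn0 : n = 0 := by
      refine hNdisj n hn fun ℓ hℓ => ?_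
      have h1 : B ℓ x = 0 := hiso ℓ (hWL hℓ) x hx
      have h2 : B ℓ h = 0 := hh ℓ (le_sup_left (α := Submodule F (∀ q, G q)) hℓ)
      have h3 : B ℓ w = 0 := hiso ℓ (hWL hℓ) w (hWL hw)
      have := h1
      rw [← hgh, map_add, h2, add_zero, ← hwn, map_add, h3, zero_add] at this
      exact this
    rw [hn0, add_zero] at hwn
    subst hwn
    have hhL : h ∈ L := by
      have : h = x - w := by rw [← hgh]; abel
      rw [this]
      exact L.sub_mem hx (hWL hw)
    exact Submodule.mem_sup.mpr ⟨w, hw, h, ⟨hhL, hh⟩, hgh⟩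
end

section
/- Consider the partition space X(P+P) on the disjoint union P + P of two copies of a finite set P, and the closed subset Z = ⋃_{R ⊆ P} X_{R + (P∖R)}, where R + (P∖R) denotes the subset of P + P consisting of R in the first copy and P∖R in the second copy. Then for all subsets S, T ⊆ P, the open set U_{S+T} meets Z if and only if S ∩ T = ∅; consequently the associated polyhedron Γ_Z = {nonempty S+T ⊆ P+P | U_{S+T} ∩ Z ≠ ∅} equals {nonempty S+T ⊆ P+P | S ∩ T = ∅}. -/
/-- The partition space `X(Q)` is `Q → Prop` with the product of Sierpiński topologies.
`partU S` is the open set `U_S`, `partX S` the closed set `X_S`. -/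
def partU {Q : Type*} (S : Set Q) : Set (Q → Prop) := {x | ∀ p ∈ S, x p}

def partX {Q : Type*} (S : Set Q) : Set (Q → Prop) := {x | ∀ p ∈ S, ¬ x p}

/-- The closed subset `Z = ⋃_{R ⊆ P} X_{R + (P∖R)}` of the partition space `X(P+P)`. -/
def diagZ (P : Type*) : Set ((P ⊕ P) → Prop) :=
  ⋃ R : Set P, partX (Sum.inl '' R ∪ Sum.inr '' Rᶜ)

lemma key {P : Type*} (S T : Set P) :
    (partU (Sum.inl '' S ∪ Sum.inr '' T) ∩ diagZ P).Nonempty ↔ S ∩ T = ∅ := by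
  constructor
  · rintro ⟨x, hU, hZ⟩
    obtain ⟨R, hR⟩ := Set.mem_iUnion.mp hZ
    ext p
    simp only [Set.mem_inter_iff, Set.mem_empty_iff_false, iff_false]
    rintro ⟨hpS, hpT⟩
    have h1 : x (Sum.inl p) := hU _ (Or.inl ⟨p, hpS, rfl⟩)
    have h2 : x (Sum.inr p) := hU _ (Or.inr ⟨p, hpT, rfl⟩)
    by_cases hpR : p ∈ R
    · exact hR _ (Or.inl ⟨p, hpR, rfl⟩) h1
    · exact hR _ (Or.inr ⟨p, hpR, rfl⟩) h2
  · intro h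
    refine ⟨fun q => q ∈ Sum.inl '' S ∪ Sum.inr '' T, fun q hq => hq, ?_⟩
    refine Set.mem_iUnion.mpr ⟨T, ?_⟩
    rintro q (⟨p, hpT, rfl⟩ | ⟨p, hpTc, rfl⟩)
    · rintro (⟨p', hp'S, hp'⟩ | ⟨p', hp'T, hp'⟩)
      · cases hp'
        exact Set.eq_empty_iff_forall_notMem.mp h p ⟨hp'S, hpT⟩
      · cases hp'
    · rintro (⟨p', hp'S, hp'⟩ | ⟨p', hp'T, hp'⟩)
      · cases hp'
      · cases hp'
        exact hpTc hp'T

/-- In `X(P+P)` with `Z = ⋃_{R ⊆ P} X_{R+(P∖R)}`: the open set `U_{S+T}` meets `Z` iff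
`S ∩ T = ∅`; consequently the associated polyhedron
`Γ_Z = {nonempty S+T | U_{S+T} ∩ Z ≠ ∅}` equals `{nonempty S+T | S ∩ T = ∅}`. -/
theorem stmt_19 {P : Type*} [Finite P] :
    (∀ S T : Set P,
      (partU (Sum.inl '' S ∪ Sum.inr '' T) ∩ diagZ P).Nonempty ↔ S ∩ T = ∅) ∧
    {Q : Set (P ⊕ P) | Q.Nonempty ∧ (partU Q ∩ diagZ P).Nonempty} =
      {Q : Set (P ⊕ P) | Q.Nonempty ∧ Sum.inl ⁻¹' Q ∩ Sum.inr ⁻¹' Q = ∅} := by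
  refine ⟨key, ?_⟩
  ext Q
  have hQ : Q = Sum.inl '' (Sum.inl ⁻¹' Q) ∪ Sum.inr '' (Sum.inr ⁻¹' Q) := by
    ext q
    cases q <;> simp
  simp only [Set.mem_setOf_eq]
  constructor
  · rintro ⟨h1, h2⟩
    refine ⟨h1, (key _ _).mp ?_⟩
    rwa [← hQ]
  · rintro ⟨h1, h2⟩
    refine ⟨h1, ?_⟩
    rw [hQ]
    exact (key _ _).mpr h2
end
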